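/- (Barbalat's Lemma) Let φ : [0, ∞) → ℝ be uniformly continuous. If lim_{t→∞} ∫₀ᵗ φ(τ) dτ exists and is finite, then φ(t) → 0 as t → ∞. -/
import Mathlib


open MeasureTheory Filter intervalIntegral

/-- Barbalat's Lemma: if `φ` is uniformly continuous on `[0, ∞)`,
locally integrable, and `∫₀ᵗ φ` converges to a finite limit as `t → ∞`, then
`φ t → 0` as `t → ∞`. -/
theorem stmt_2 (φ : ℝ → ℝ)
    (huc : UniformContinuousOn φ (Set.Ici 0))
    (hint : ∀ t : ℝ, 0 ≤ t → IntegrableOn φ (Set.Icc 0 t))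
    (L : ℝ)
    (hlim : Tendsto (fun t => ∫ τ in (0:ℝ)..t, φ τ) atTop (nhds L)) :
    Tendsto φ atTop (nhds 0) := by
  by_contra hcon
  rw [Metric.tendsto_atTop] at hcon
  push_neg at hcon
  obtain ⟨ε, hε, hseq⟩ := hcon
  rw [Metric.uniformContinuousOn_iff] at huc
  obtain ⟨δ, hδ, hucd⟩ := huc (ε/2) (by positivity)
  set d := δ/2 with hdd
  have hd : 0 < d := by positivity
  have h1 : Tendsto (fun t => (∫ τ in (0:ℝ)..(t+d), φ τ) - ∫ τ in (0:ℝ)..t, φ τ)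
      atTop (nhds 0) := by
    have h2 := (hlim.comp (tendsto_atTop_add_const_right atTop d tendsto_id)).sub hlim
    simpa using h2
  rw [Metric.tendsto_atTop] at h1
  obtain ⟨N, hN⟩ := h1 (ε/2 * d) (by positivity)
  obtain ⟨t, ht, hφt⟩ := hseq (max N 0)
  have ht0 : (0:ℝ) ≤ t := le_trans (le_max_right _ _) ht
  have htN : N ≤ t := le_trans (le_max_left _ _) ht
  have habs : ε ≤ |φ t| := by simpa [Real.dist_eq] using hφt
  have hkey : ∀ s ∈ Set.Icc t (t+d), |φ s - φ t| < ε/2 := by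
    intro s hs
    have hs0 : s ∈ Set.Ici (0:ℝ) := Set.mem_Ici.2 (le_trans ht0 hs.1)
    have hdist : dist s t < δ := by
      rw [Real.dist_eq, abs_of_nonneg (sub_nonneg.2 hs.1)]
      have h3 := hs.2
      linarith
    have h4 := hucd s hs0 t (Set.mem_Ici.2 ht0) hdist
    rwa [Real.dist_eq] at h4
  have hled : t ≤ t + d := by linarith
  have hintd : IntervalIntegrable φ volume t (t+d) := by
    have h5 := (hint (t+d) (by linarith)).mono_set
      (Set.Icc_subset_Icc ht0 le_rfl)
    exact (intervalIntegrable_iff_integrableOn_Icc_of_le hled).2 h5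
  have hint0t : IntervalIntegrable φ volume 0 t :=
    (intervalIntegrable_iff_integrableOn_Icc_of_le ht0).2 (hint t ht0)
  have hsplit : (∫ τ in (0:ℝ)..(t+d), φ τ) - (∫ τ in (0:ℝ)..t, φ τ)
      = ∫ τ in t..(t+d), φ τ := by
    rw [← intervalIntegral.integral_add_adjacent_intervals hint0t hintd]
    ring
  have hsmall : |∫ τ in t..(t+d), φ τ| < ε/2 * d := by
    have h6 := hN t htN
    rw [Real.dist_eq, sub_zero, hsplit] at h6
    exact h6
  have hconst : IntervalIntegrable (fun _ : ℝ => ε/2) volume t (t+d) :=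
    intervalIntegrable_const
  have hconst' : IntervalIntegrable (fun _ : ℝ => -(ε/2)) volume t (t+d) :=
    intervalIntegrable_const
  rcases le_or_gt 0 (φ t) with hpos | hneg
  · have hεt : ε ≤ φ t := by rwa [abs_of_nonneg hpos] at habs
    have hlow : ∀ s ∈ Set.Icc t (t+d), ε/2 ≤ φ s := by
      intro s hs
      have := hkey s hs
      have := abs_lt.1 this
      linarith [this.1]
    have hge : ε/2 * d ≤ ∫ τ in t..(t+d), φ τ := by
      have h7 := intervalIntegral.integral_mono_on hled hconst hintd hlow
      rwa [intervalIntegral.integral_const, smul_eq_mul,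
        add_sub_cancel_left, mul_comm] at h7
    have := le_trans hge (le_abs_self _)
    linarith
  · have hεt : φ t ≤ -ε := by
      rw [abs_of_neg hneg] at habs; linarith
    have hhigh : ∀ s ∈ Set.Icc t (t+d), φ s ≤ -(ε/2) := by
      intro s hs
      have := abs_lt.1 (hkey s hs)
      linarith [this.2]
    have hle : (∫ τ in t..(t+d), φ τ) ≤ -(ε/2) * d := by
      have h8 := intervalIntegral.integral_mono_on hled hintd hconst' hhigh
      rwa [intervalIntegral.integral_const, smul_eq_mul,
        add_sub_cancel_left, mul_comm] at h8
    have h9 : ε/2 * d ≤ |∫ τ in t..(t+d), φ τ| := by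
      have := neg_le_neg hle
      calc ε/2 * d = -(-(ε/2) * d) := by ring
        _ ≤ -(∫ τ in t..(t+d), φ τ) := this
        _ ≤ |∫ τ in t..(t+d), φ τ| := neg_le_abs _
    linarith
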